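/- Let A be the algebra with basis e₁,…,eₙ, e_i·e_j = e_{max(i,j)}, with Δ(e_i) = Σ_{k=i}^{n−1}(e_k−e_{k+1})⊗(e_k−e_{k+1}) + eₙ⊗eₙ and ε(e_i) = n−i+1. Then the weak counit identity holds: for all i, j, k, ε(e_i·e_j·e_k) = Σ ε(e_i·(e_j)₍₁₎) ε((e_j)₍₂₎·e_k), i.e. both sides equal n − max(i,j,k) + 1. -/
import Mathlib

open TensorProduct

noncomputable def maxBasis (K : Type*) [Field K] (n : ℕ) (i : Fin n) : Fin n → K :=
  fun j => if i ≤ j then 1 else 0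

noncomputable def orthIdem (K : Type*) [Field K] (n : ℕ) (i : Fin n) : Fin n → K :=
  if h : i.val + 1 < n then maxBasis K n i - maxBasis K n ⟨i.val + 1, h⟩
  else maxBasis K n i

noncomputable def maxComulBasis (K : Type*) [Field K] (n : ℕ) (i : Fin n) :
    (Fin n → K) ⊗[K] (Fin n → K) :=
  ∑ k ∈ Finset.univ.filter (fun k => i ≤ k), (orthIdem K n k) ⊗ₜ[K] (orthIdem K n k)

noncomputable def maxComul (K : Type*) [Field K] (n : ℕ) :
    (Fin n → K) →ₗ[K] (Fin n → K) ⊗[K] (Fin n → K) :=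
  ∑ k : Fin n,
    (LinearMap.proj k : (Fin n → K) →ₗ[K] K).smulRight
      ((orthIdem K n k) ⊗ₜ[K] (orthIdem K n k))

noncomputable def maxCounit (K : Type*) [Field K] (n : ℕ) : (Fin n → K) →ₗ[K] K :=
  ∑ k : Fin n, (LinearMap.proj k : (Fin n → K) →ₗ[K] K)

lemma orthIdem_apply (K : Type*) [Field K] (n : ℕ) (k t : Fin n) :
    orthIdem K n k t = if t = k then (1 : K) else 0 := by
  have ht := t.isLt
  unfold orthIdem
  split_ifs with h <;>
    simp only [Pi.sub_apply, maxBasis] <;>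
    split_ifs <;>
      first
      | (simp only [Fin.le_def, Fin.ext_iff, Fin.val_mk] at *; omega)
      | simp

lemma maxCounit_apply (K : Type*) [Field K] (n : ℕ) (f : Fin n → K) :
    maxCounit K n f = ∑ t, f t := by
  simp [maxCounit, LinearMap.proj_apply]

lemma maxComul_apply (K : Type*) [Field K] (n : ℕ) (f : Fin n → K) :
    maxComul K n f = ∑ t, f t • ((orthIdem K n t) ⊗ₜ[K] (orthIdem K n t)) := by
  simp [maxComul, LinearMap.proj_apply]

lemma maxBasis_mul (K : Type*) [Field K] (n : ℕ) (i j : Fin n) :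
    maxBasis K n i * maxBasis K n j = maxBasis K n (max i j) := by
  funext t
  simp only [Pi.mul_apply, maxBasis, max_le_iff]
  split_ifs <;> first | (simp only [Fin.le_def, not_and] at *; omega) | simp

lemma counit_mul_orthIdem (K : Type*) [Field K] (n : ℕ) (f : Fin n → K) (k : Fin n) :
    maxCounit K n (f * orthIdem K n k) = f k := by
  rw [maxCounit_apply]
  simp [Pi.mul_apply, orthIdem_apply, mul_ite, Finset.sum_ite_eq']

lemma counit_orthIdem_mul (K : Type*) [Field K] (n : ℕ) (f : Fin n → K) (k : Fin n) :
    maxCounit K n (orthIdem K n k * f) = f k := by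
  rw [maxCounit_apply]
  simp [Pi.mul_apply, orthIdem_apply, ite_mul, Finset.sum_ite_eq']

lemma counit_maxBasis (K : Type*) [Field K] (n : ℕ) (m : Fin n) :
    maxCounit K n (maxBasis K n m) = (n : K) - (m.val : K) := by
  rw [maxCounit_apply]
  unfold maxBasis
  rw [Finset.sum_boole]
  have : Finset.univ.filter (fun t => m ≤ t) = Finset.Ici m := by
    ext t; simp
  rw [this, Fin.card_Ici]
  rw [Nat.cast_sub m.isLt.le]

/-- the weak counit identity
`ε(e_i·e_j·e_k) = Σ ε(e_i·(e_j)₍₁₎) ε((e_j)₍₂₎·e_k)`, both sides being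
`n − max(i,j,k) + 1` (zero-indexed: `n − max(i,j,k)`). -/
theorem stmt11 (K : Type*) [Field K] [CharZero K] (n : ℕ) [NeZero n] :
    (∀ i : Fin n, maxComul K n (maxBasis K n i) = maxComulBasis K n i)
    ∧ (∀ i j k : Fin n,
        maxCounit K n (maxBasis K n i * maxBasis K n j * maxBasis K n k)
          = (TensorProduct.lid K K)
              (TensorProduct.map
                (maxCounit K n ∘ₗ LinearMap.mulLeft K (maxBasis K n i))
                (maxCounit K n ∘ₗ LinearMap.mulRight K (maxBasis K n k))
                (maxComul K n (maxBasis K n j))))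
    ∧ (∀ i j k : Fin n,
        maxCounit K n (maxBasis K n i * maxBasis K n j * maxBasis K n k)
          = (n : K) - ((max i (max j k)).val : K)) := by
  have h1 : ∀ i : Fin n, maxComul K n (maxBasis K n i) = maxComulBasis K n i := by
    intro i
    rw [maxComul_apply, maxComulBasis, Finset.sum_filter]
    refine Finset.sum_congr rfl fun t _ => ?_
    simp only [maxBasis]
    split_ifs <;> simp
  refine ⟨h1, fun i j k => ?_, fun i j k => ?_⟩
  · rw [h1 j, maxComulBasis, map_sum, map_sum]
    simp only [TensorProduct.map_tmul, TensorProduct.lid_tmul, LinearMap.comp_apply,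
      LinearMap.mulLeft_apply, LinearMap.mulRight_apply, counit_mul_orthIdem,
      counit_orthIdem_mul, smul_eq_mul]
    rw [maxBasis_mul, maxBasis_mul, maxCounit_apply, Finset.sum_filter]
    refine Finset.sum_congr rfl fun t _ => ?_
    simp only [maxBasis, max_le_iff]
    split_ifs <;> first | (simp only [Fin.le_def, not_and] at *; omega) | simp
  · rw [maxBasis_mul, maxBasis_mul, counit_maxBasis, max_assoc]
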